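/- In the group E'(r,t) of invertible elements of G'(r,t), for every element g = (x,0,z) with x a unit of ℤ/2^{r+1} and z ∈ ℤ/2^t, if g⁻¹ = (x',0,z') denotes its inverse, then the conjugate g ∘ (1,1,0) ∘ g⁻¹ equals (1, 1 + π(x')·μ(z), 0). -/

import Mathlib

/-- The composition law of `[C,C]` for the elementary Chang complex `C = C^{n+2,t}_r`
with `t < r`, in coordinates `ℤ/2^{r+1} × ℤ/2^{t+1} × ℤ/2^t`. -/
def changOp' (r t : ℕ) (htr : t ≤ r)
    (a b : ZMod (2 ^ (r + 1)) × ZMod (2 ^ (t + 1)) × ZMod (2 ^ t)) :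
    ZMod (2 ^ (r + 1)) × ZMod (2 ^ (t + 1)) × ZMod (2 ^ t) :=
  (a.1 * b.1,
   ZMod.castHom (pow_dvd_pow 2 (by omega : t + 1 ≤ r + 1)) (ZMod (2 ^ (t + 1))) a.1 * b.2.1
     + ZMod.castHom (pow_dvd_pow 2 (by omega : t + 1 ≤ r + 1)) (ZMod (2 ^ (t + 1))) b.1 * a.2.1
     + b.2.1 * (2 * (ZMod.cast a.2.2 : ZMod (2 ^ (t + 1)))),
   ZMod.castHom (pow_dvd_pow 2 (by omega : t ≤ r + 1)) (ZMod (2 ^ t)) a.1 * b.2.2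
     + ZMod.castHom (pow_dvd_pow 2 (by omega : t ≤ r + 1)) (ZMod (2 ^ t)) b.1 * a.2.2
     + 2 * a.2.2 * b.2.2)

/-- For `r > t ≥ 1`: in the group `E'(r,t)` of invertible elements of `G'(r,t)`, if
`g = (x,0,z)` with `x` a unit and `g⁻¹ = (x',0,z')`, then
`g ∘ (1,1,0) ∘ g⁻¹ = (1, 1 + π(x')·μ(z), 0)`. -/
theorem stmt9 (r t : ℕ) (htr : t < r)
    (x x' : ZMod (2 ^ (r + 1))) (z z' : ZMod (2 ^ t))
    (hinv₁ : changOp' r t htr.le (x, 0, z) (x', 0, z') = (1, 0, 0)) :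
    changOp' r t htr.le (changOp' r t htr.le (x, 0, z) (1, 1, 0)) (x', 0, z')
      = (1,
         1 + ZMod.castHom (pow_dvd_pow 2 (by omega : t + 1 ≤ r + 1)) (ZMod (2 ^ (t + 1))) x'
           * (2 * (ZMod.cast z : ZMod (2 ^ (t + 1)))),
         0) := by
  set π := ZMod.castHom (pow_dvd_pow 2 (by omega : t + 1 ≤ r + 1)) (ZMod (2 ^ (t + 1)))
  simp only [changOp', Prod.mk.injEq, mul_zero, zero_mul, mul_one, one_mul, add_zero,
    zero_add, map_one] at hinv₁ ⊢
  obtain ⟨hxx', -, hzz'⟩ := hinv₁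
  have hπ : π x * π x' = 1 := by rw [← map_mul, hxx', map_one]
  exact ⟨hxx', by linear_combination hπ, by linear_combination hzz'⟩
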